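/- arXiv:2110.04493 — 7 statements merged into one kernel-verified Lean document; each statement's English description precedes it below -/
import Mathlib

section
/- Let A ∈ ℂ^{n×n} and let Ā satisfy ‖A − Ā‖ ≤ δ‖A‖. Then for any ε ≥ δ, β(ε, A) ≤ β(ε̄, Ā), where ε̄ = (‖A‖/‖Ā‖)(ε − δ). -/
/-- The set of index pairs where the matrix entry is nonzero. -/
def Omega {n : ℕ} (A : Matrix (Fin n) (Fin n) ℂ) : Set (Fin n × Fin n) :=
  {p | A p.1 p.2 ≠ 0}

/-- Upper bandwidth `l₁(A) = max_{a_{ij} ≠ 0} (j - i)` (max over ∅ is 0). -/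
noncomputable def l1 {n : ℕ} (A : Matrix (Fin n) (Fin n) ℂ) : ℕ :=
  Finset.sup (Finset.univ.filter fun p : Fin n × Fin n => A p.1 p.2 ≠ 0)
    fun p => p.2.val - p.1.val

/-- Lower bandwidth `l₂(A) = max_{a_{ij} ≠ 0} (i - j)` (max over ∅ is 0). -/
noncomputable def l2 {n : ℕ} (A : Matrix (Fin n) (Fin n) ℂ) : ℕ :=
  Finset.sup (Finset.univ.filter fun p : Fin n × Fin n => A p.1 p.2 ≠ 0)
    fun p => p.1.val - p.2.val

/-- Bandwidth `l(A) = l₁(A) + l₂(A)`. -/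
noncomputable def bw {n : ℕ} (A : Matrix (Fin n) (Fin n) ℂ) : ℕ := l1 A + l2 A

/-- Real bandwidth `λ(A)`: minimum bandwidth over simultaneous row/column permutations. -/
noncomputable def lam {n : ℕ} (A : Matrix (Fin n) (Fin n) ℂ) : ℕ :=
  sInf {m | ∃ σ : Equiv.Perm (Fin n), bw (A.submatrix σ σ) = m}

attribute [local instance] Matrix.frobeniusNormedAddCommGroup

/-- `ε`-bandwidth `β(ε, A)`: minimum real bandwidth of `A - B` over all `B`
with `‖B‖ ≤ ε‖A‖` (Frobenius norm). -/
noncomputable def beta {n : ℕ} (ε : ℝ) (A : Matrix (Fin n) (Fin n) ℂ) : ℕ :=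
  sInf {m | ∃ B : Matrix (Fin n) (Fin n) ℂ, ‖B‖ ≤ ε * ‖A‖ ∧ lam (A - B) = m}

/-- Lemma 3.4: if `‖A - Ā‖ ≤ δ‖A‖` then for any `ε ≥ δ`,
`β(ε, A) ≤ β(ε̄, Ā)` with `ε̄ = (‖A‖/‖Ā‖)(ε - δ)`. -/
theorem beta_le_beta_approx {n : ℕ} (A Abar : Matrix (Fin n) (Fin n) ℂ) (δ ε : ℝ)
    (hAbar : Abar ≠ 0) (hδ : ‖A - Abar‖ ≤ δ * ‖A‖) (hε : δ ≤ ε) :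
    beta ε A ≤ beta (‖A‖ / ‖Abar‖ * (ε - δ)) Abar := by
  have hnA : (0:ℝ) ≤ ‖A‖ := norm_nonneg _
  have hnAbar : (0:ℝ) < ‖Abar‖ := norm_pos_iff.mpr hAbar
  have hεδ : (0:ℝ) ≤ ε - δ := sub_nonneg.mpr hε
  have hkey : ‖A‖ / ‖Abar‖ * (ε - δ) * ‖Abar‖ = (ε - δ) * ‖A‖ := by
    field_simp
  -- the target set for Abar is nonempty (take B = 0)
  have hne : {m | ∃ B : Matrix (Fin n) (Fin n) ℂ,
      ‖B‖ ≤ (‖A‖ / ‖Abar‖ * (ε - δ)) * ‖Abar‖ ∧ lam (Abar - B) = m}.Nonempty := by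
    exact ⟨lam (Abar - 0), 0, by
      simp only [norm_zero]
      rw [hkey]
      positivity, rfl⟩
  unfold beta
  obtain ⟨B, hB, hlam⟩ := Nat.sInf_mem hne
  apply Nat.sInf_le
  refine ⟨B + (A - Abar), ?_, ?_⟩
  · calc ‖B + (A - Abar)‖ ≤ ‖B‖ + ‖A - Abar‖ := norm_add_le _ _
      _ ≤ (ε - δ) * ‖A‖ + δ * ‖A‖ := by
          apply add_le_add _ hδ
          rwa [hkey] at hB
      _ = ε * ‖A‖ := by ring
  · have : A - (B + (A - Abar)) = Abar - B := by abel
    rw [this, hlam]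
end

section
/- Let A, B ∈ ℂ^{n×n} and p_m(X) = Σ_{i=0}^m c_i X^i. Then β(ε_p, p_m(A)) ≤ m·λ(A − B), where ε_p = ‖p_m(A) − p_m(A−B)‖ / ‖p_m(A)‖. -/
lemma l1_le {n : ℕ} {X : Matrix (Fin n) (Fin n) ℂ} {N : ℕ}
    (h : ∀ i j : Fin n, X i j ≠ 0 → j.val - i.val ≤ N) : l1 X ≤ N :=
  Finset.sup_le fun p hp => h p.1 p.2 (Finset.mem_filter.mp hp).2

lemma le_l1 {n : ℕ} {X : Matrix (Fin n) (Fin n) ℂ} {i j : Fin n} (h : X i j ≠ 0) :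
    j.val - i.val ≤ l1 X :=
  Finset.le_sup (f := fun p : Fin n × Fin n => p.2.val - p.1.val)
    (Finset.mem_filter.mpr ⟨Finset.mem_univ (i, j), h⟩)

lemma l2_le {n : ℕ} {X : Matrix (Fin n) (Fin n) ℂ} {N : ℕ}
    (h : ∀ i j : Fin n, X i j ≠ 0 → i.val - j.val ≤ N) : l2 X ≤ N :=
  Finset.sup_le fun p hp => h p.1 p.2 (Finset.mem_filter.mp hp).2

lemma le_l2 {n : ℕ} {X : Matrix (Fin n) (Fin n) ℂ} {i j : Fin n} (h : X i j ≠ 0) :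
    i.val - j.val ≤ l2 X :=
  Finset.le_sup (f := fun p : Fin n × Fin n => p.1.val - p.2.val)
    (Finset.mem_filter.mpr ⟨Finset.mem_univ (i, j), h⟩)

lemma exists_of_mul_ne_zero {n : ℕ} {X Y : Matrix (Fin n) (Fin n) ℂ} {i j : Fin n}
    (h : (X * Y) i j ≠ 0) : ∃ k, X i k ≠ 0 ∧ Y k j ≠ 0 := by
  by_contra hc
  push_neg at hc
  apply h
  rw [Matrix.mul_apply]
  apply Finset.sum_eq_zero
  intro k _
  by_cases hx : X i k = 0
  · simp [hx]
  · simp [hc k hx]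

lemma l1_mul {n : ℕ} (X Y : Matrix (Fin n) (Fin n) ℂ) : l1 (X * Y) ≤ l1 X + l1 Y := by
  apply l1_le
  intro i j h
  obtain ⟨k, hx, hy⟩ := exists_of_mul_ne_zero h
  have h1 := le_l1 hx
  have h2 := le_l1 hy
  omega

lemma l2_mul {n : ℕ} (X Y : Matrix (Fin n) (Fin n) ℂ) : l2 (X * Y) ≤ l2 X + l2 Y := by
  apply l2_le
  intro i j h
  obtain ⟨k, hx, hy⟩ := exists_of_mul_ne_zero h
  have h1 := le_l2 hx
  have h2 := le_l2 hy
  omega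

lemma l1_pow {n : ℕ} (X : Matrix (Fin n) (Fin n) ℂ) (i : ℕ) : l1 (X ^ i) ≤ i * l1 X := by
  induction i with
  | zero =>
    apply l1_le
    intro a b h
    simp only [pow_zero] at h
    have : a = b := by
      by_contra hne
      exact h (Matrix.one_apply_ne hne)
    omega
  | succ k ih =>
    calc l1 (X ^ (k + 1)) = l1 (X ^ k * X) := by rw [pow_succ]
    _ ≤ l1 (X ^ k) + l1 X := l1_mul _ _
    _ ≤ k * l1 X + l1 X := by omega
    _ = (k + 1) * l1 X := by ring

lemma l2_pow {n : ℕ} (X : Matrix (Fin n) (Fin n) ℂ) (i : ℕ) : l2 (X ^ i) ≤ i * l2 X := by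
  induction i with
  | zero =>
    apply l2_le
    intro a b h
    simp only [pow_zero] at h
    have : a = b := by
      by_contra hne
      exact h (Matrix.one_apply_ne hne)
    omega
  | succ k ih =>
    calc l2 (X ^ (k + 1)) = l2 (X ^ k * X) := by rw [pow_succ]
    _ ≤ l2 (X ^ k) + l2 X := l2_mul _ _
    _ ≤ k * l2 X + l2 X := by omega
    _ = (k + 1) * l2 X := by ring

lemma l1_poly {n : ℕ} (X : Matrix (Fin n) (Fin n) ℂ) (m : ℕ) (c : ℕ → ℂ) :
    l1 (∑ i ∈ Finset.range (m + 1), c i • X ^ i) ≤ m * l1 X := by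
  apply l1_le
  intro a b h
  rw [Matrix.sum_apply] at h
  obtain ⟨i, hi, hne⟩ := Finset.exists_ne_zero_of_sum_ne_zero h
  have hXi : (X ^ i) a b ≠ 0 := by
    intro h0
    apply hne
    simp [Matrix.smul_apply, h0]
  have h1 := le_trans (le_l1 hXi) (l1_pow X i)
  have him : i ≤ m := by
    have := Finset.mem_range.mp hi; omega
  have : i * l1 X ≤ m * l1 X := Nat.mul_le_mul_right _ him
  omega

lemma l2_poly {n : ℕ} (X : Matrix (Fin n) (Fin n) ℂ) (m : ℕ) (c : ℕ → ℂ) :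
    l2 (∑ i ∈ Finset.range (m + 1), c i • X ^ i) ≤ m * l2 X := by
  apply l2_le
  intro a b h
  rw [Matrix.sum_apply] at h
  obtain ⟨i, hi, hne⟩ := Finset.exists_ne_zero_of_sum_ne_zero h
  have hXi : (X ^ i) a b ≠ 0 := by
    intro h0
    apply hne
    simp [Matrix.smul_apply, h0]
  have h1 := le_trans (le_l2 hXi) (l2_pow X i)
  have him : i ≤ m := by
    have := Finset.mem_range.mp hi; omega
  have : i * l2 X ≤ m * l2 X := Nat.mul_le_mul_right _ him
  omega

lemma submatrix_poly {n : ℕ} (X : Matrix (Fin n) (Fin n) ℂ) (σ : Equiv.Perm (Fin n))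
    (m : ℕ) (c : ℕ → ℂ) :
    (∑ i ∈ Finset.range (m + 1), c i • X ^ i).submatrix σ σ
      = ∑ i ∈ Finset.range (m + 1), c i • (X.submatrix σ σ) ^ i := by
  have key : ∀ i : ℕ, (X ^ i).submatrix (σ : Fin n → Fin n) σ = (X.submatrix σ σ) ^ i := by
    intro i
    induction i with
    | zero => simp [Matrix.submatrix_one_equiv]
    | succ k ih =>
      rw [pow_succ, pow_succ, ← ih]
      exact (Matrix.submatrix_mul_equiv _ _ _ _ _).symm
  ext i j
  simp only [Matrix.sum_apply, Matrix.submatrix_apply, Matrix.smul_apply, smul_eq_mul]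
  exact Finset.sum_congr rfl fun x _ => by rw [← key x]; rfl

lemma lam_nonempty {n : ℕ} (X : Matrix (Fin n) (Fin n) ℂ) :
    {m | ∃ σ : Equiv.Perm (Fin n), bw (X.submatrix σ σ) = m}.Nonempty :=
  ⟨bw (X.submatrix (Equiv.refl (Fin n)) (Equiv.refl (Fin n))), Equiv.refl (Fin n), rfl⟩

lemma lam_poly_le {n : ℕ} (X : Matrix (Fin n) (Fin n) ℂ) (m : ℕ) (c : ℕ → ℂ) :
    lam (∑ i ∈ Finset.range (m + 1), c i • X ^ i) ≤ m * lam X := by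
  obtain ⟨σ, hσ⟩ := Nat.sInf_mem (lam_nonempty X)
  have h1 : lam (∑ i ∈ Finset.range (m + 1), c i • X ^ i)
      ≤ bw ((∑ i ∈ Finset.range (m + 1), c i • X ^ i).submatrix σ σ) :=
    Nat.sInf_le ⟨σ, rfl⟩
  rw [submatrix_poly] at h1
  calc lam (∑ i ∈ Finset.range (m + 1), c i • X ^ i)
      ≤ bw (∑ i ∈ Finset.range (m + 1), c i • (X.submatrix σ σ) ^ i) := h1
    _ ≤ m * l1 (X.submatrix σ σ) + m * l2 (X.submatrix σ σ) :=
        Nat.add_le_add (l1_poly _ _ _) (l2_poly _ _ _)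
    _ = m * bw (X.submatrix σ σ) := by rw [bw, Nat.mul_add]
    _ = m * lam X := by rw [hσ]; rfl

attribute [local instance] Matrix.frobeniusNormedAddCommGroup

/-- Lemma 3.5(c): `β(ε_p, p_m(A)) ≤ m·λ(A - B)` where
`ε_p = ‖p_m(A) - p_m(A-B)‖ / ‖p_m(A)‖`. -/
theorem beta_poly_le_lam {n : ℕ} (A B : Matrix (Fin n) (Fin n) ℂ) (m : ℕ) (c : ℕ → ℂ)
    (p : Matrix (Fin n) (Fin n) ℂ → Matrix (Fin n) (Fin n) ℂ)
    (hp : ∀ X, p X = ∑ i ∈ Finset.range (m + 1), c i • X ^ i)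
    (hpA : p A ≠ 0) :
    beta (‖p A - p (A - B)‖ / ‖p A‖) (p A) ≤ m * lam (A - B) := by
  have hnorm : (0:ℝ) < ‖p A‖ := norm_pos_iff.mpr hpA
  calc beta (‖p A - p (A - B)‖ / ‖p A‖) (p A) ≤ lam (p A - (p A - p (A - B))) :=
        Nat.sInf_le ⟨p A - p (A - B),
          le_of_eq (div_mul_cancel₀ _ (ne_of_gt hnorm)).symm, rfl⟩
    _ = lam (p (A - B)) := by rw [sub_sub_cancel]
    _ ≤ m * lam (A - B) := by rw [hp]; exact lam_poly_le _ _ _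
end

section
/- Let F₀ be invertible, R₀ ∈ ℂ^{n×n} commute with F₀, and define F_i = F₀^{2^i}, F̄₀ = F₀ − R₀, F̄_i = F̄₀^{2^i}. Then F_i − F̄_i = F₀^{2^i}[I − (I − F₀⁻¹R₀)^{2^i}], and consequently ‖F_i − F̄_i‖ / ‖F₀^{2^i}‖ ≤ (1 + ‖F₀⁻¹R₀‖)^{2^i} − 1. -/
attribute [local instance] Matrix.linftyOpNormedRing Matrix.linftyOpNormedAlgebra

lemma one_sub_pow_norm_bound {A : Type*} [NormedRing A] (h1 : ‖(1 : A)‖ ≤ 1) (X : A) (k : ℕ) :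
    ‖1 - (1 - X) ^ k‖ ≤ (1 + ‖X‖) ^ k - 1 := by
  induction k with
  | zero => simp
  | succ k ih =>
    have hy : ‖(1 : A) - X‖ ≤ 1 + ‖X‖ :=
      (norm_sub_le _ _).trans (by linarith)
    have key : (1 : A) - (1 - X) ^ (k + 1) = X + (1 - X) * (1 - (1 - X) ^ k) := by
      rw [pow_succ']; noncomm_ring
    rw [key]
    calc ‖X + (1 - X) * (1 - (1 - X) ^ k)‖
        ≤ ‖X‖ + ‖(1 - X)‖ * ‖(1 - (1 - X) ^ k)‖ :=
          (norm_add_le _ _).trans (by gcongr; exact norm_mul_le _ _)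
      _ ≤ ‖X‖ + (1 + ‖X‖) * ((1 + ‖X‖) ^ k - 1) := by gcongr
      _ = (1 + ‖X‖) ^ (k + 1) - 1 := by ring

/-- Squaring-phase error: with `F_i = F₀^{2^i}` and `F̄_i = (F₀ - R₀)^{2^i}`,
`F_i - F̄_i = F₀^{2^i}(I - (I - F₀⁻¹R₀)^{2^i})` and
`‖F_i - F̄_i‖/‖F₀^{2^i}‖ ≤ (1 + ‖F₀⁻¹R₀‖)^{2^i} - 1`. -/
theorem squaring_error_bound {n : ℕ} [DecidableEq (Fin n)]
    (F₀ R₀ : Matrix (Fin n) (Fin n) ℂ) [Invertible F₀] (hcomm : Commute F₀ R₀) (i : ℕ) :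
    F₀ ^ 2 ^ i - (F₀ - R₀) ^ 2 ^ i =
      F₀ ^ 2 ^ i * (1 - (1 - ⅟F₀ * R₀) ^ 2 ^ i) ∧
    ‖F₀ ^ 2 ^ i - (F₀ - R₀) ^ 2 ^ i‖ / ‖F₀ ^ 2 ^ i‖ ≤
      (1 + ‖⅟F₀ * R₀‖) ^ 2 ^ i - 1 := by
  set k := 2 ^ i
  have hinv : Commute (⅟F₀) R₀ := hcomm.invOf_left
  have hc : Commute F₀ (1 - ⅟F₀ * R₀) := by
    refine (Commute.one_right F₀).sub_right ?_
    exact ((Commute.invOf_right (Commute.refl F₀)).mul_right hcomm)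
  have hfact : F₀ - R₀ = F₀ * (1 - ⅟F₀ * R₀) := by
    rw [mul_sub, mul_one, ← mul_assoc, mul_invOf_self, one_mul]
  have heq : F₀ ^ k - (F₀ - R₀) ^ k = F₀ ^ k * (1 - (1 - ⅟F₀ * R₀) ^ k) := by
    rw [hfact, hc.mul_pow, mul_sub, mul_one]
  refine ⟨heq, ?_⟩
  have h1 : ‖(1 : Matrix (Fin n) (Fin n) ℂ)‖ ≤ 1 := by
    cases n with
    | zero => simp [Subsingleton.elim (1 : Matrix (Fin 0) (Fin 0) ℂ) 0]
    | succ m => exact le_of_eq norm_one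
  have hb := one_sub_pow_norm_bound h1 (⅟F₀ * R₀) k
  have hrhs : (0:ℝ) ≤ (1 + ‖⅟F₀ * R₀‖) ^ k - 1 := (norm_nonneg _).trans hb
  rcases eq_or_lt_of_le (norm_nonneg (F₀ ^ k)) with h0 | h0
  · rw [← h0, div_zero]; exact hrhs
  · rw [div_le_iff₀ h0, heq]
    calc ‖F₀ ^ k * (1 - (1 - ⅟F₀ * R₀) ^ k)‖
        ≤ ‖F₀ ^ k‖ * ‖1 - (1 - ⅟F₀ * R₀) ^ k‖ := norm_mul_le _ _
      _ ≤ ‖F₀ ^ k‖ * ((1 + ‖⅟F₀ * R₀‖) ^ k - 1) := by gcongr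
      _ = ((1 + ‖⅟F₀ * R₀‖) ^ k - 1) * ‖F₀ ^ k‖ := by ring
end

section
/- Let H₀ ∈ ℂ^{n×n}, F₀ = e^{H₀}, and R₀ = F₀ − Σ_{s=0}^{M}H₀^s/s! be the Taylor remainder. Then F₀⁻¹R₀ = Σ_{i=0}^{∞} H₀^{M+1+i} (−1)^i / (i! · M! · (i+M+1)), and hence ‖F₀⁻¹R₀‖ ≤ (1/M!) Σ_{i=0}^{∞} ‖H₀‖^{M+1+i} / (i!(i+M+1)). -/
/-!
The product `e^{-x} (e^x - T_M(x))` is the Cauchy product of the exponential series of `-x` with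
the tail `∑_k x^{M+1+k}/(M+1+k)!`; all terms are powers of the single element `x`, so the
coefficient of `x^{M+1+i}` is `∑_{j+k=i} (-1)^j / (j! (M+1+k)!)`. Multiplied by `(M+i+1)!` this
is the partial alternating binomial sum `∑_{j≤i} (-1)^j C(M+i+1, j) = (-1)^i C(M+i, i)`, which
gives `(-1)^i / (i! M! (i+M+1))`. The norm bound is the triangle inequality for this series,
which is dominated by `‖x‖^{M+1} e^{‖x‖}`.
-/

open Finset NormedSpace
open scoped Nat

theorem sum_antidiagonal_neg_one_pow_div_factorial_mul_factorial {K : Type*} [Field K]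
    [CharZero K] (M i : ℕ) :
    ∑ p ∈ antidiagonal i, (-1 : K) ^ p.1 / (p.1 ! * (M + 1 + p.2)!) =
      (-1) ^ i / (i ! * M ! * (i + M + 1)) := by
  have hterm : ∀ p ∈ antidiagonal i, (-1 : K) ^ p.1 / (p.1 ! * (M + 1 + p.2)!) =
      (-1) ^ p.1 * ((M + i + 1).choose p.1 : K) / (M + i + 1)! := by
    intro p hp
    rw [HasAntidiagonal.mem_antidiagonal] at hp
    rw [Nat.cast_choose K (by omega), show M + i + 1 - p.1 = M + 1 + p.2 by omega]
    have : ((M + i + 1)! : K) ≠ 0 := Nat.cast_ne_zero.2 (Nat.factorial_ne_zero _)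
    field_simp
  have hchoose : ((M + i).choose i : K) = (M + i)! / (i ! * M !) := by
    rw [Nat.cast_choose K (by omega), Nat.add_sub_cancel]
  have halt : ∑ j ∈ range (i + 1), (-1 : K) ^ j * ((M + i + 1).choose j : K) =
      (-1) ^ i * ((M + i).choose i : K) := by
    exact_mod_cast congrArg (Int.cast : ℤ → K) Int.alternating_sum_range_choose_eq_choose
  rw [sum_congr rfl hterm, ← sum_div, Nat.sum_antidiagonal_eq_sum_range_succ_mk, halt, hchoose,
    Nat.factorial_succ]
  have : ((M + i)! : K) ≠ 0 := Nat.cast_ne_zero.2 (Nat.factorial_ne_zero _)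
  push_cast
  field_simp
  ring

theorem summable_pow_div_factorial_mul (r : ℝ) (M : ℕ) :
    Summable fun i : ℕ => r ^ (M + 1 + i) / (i ! * (i + M + 1)) := by
  refine .of_norm_bounded ((Real.summable_pow_div_factorial |r|).mul_left (|r| ^ (M + 1)))
    fun i => ?_
  rw [Real.norm_eq_abs, abs_div, abs_pow, pow_add, mul_div_assoc,
    abs_of_pos (a := (i ! : ℝ) * (i + M + 1)) (by positivity)]
  gcongr
  exact le_mul_of_one_le_right (by positivity) (by
    linarith [(Nat.cast_nonneg i : (0 : ℝ) ≤ i), (Nat.cast_nonneg M : (0 : ℝ) ≤ M)])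

section ExpTaylorRemainder

variable {𝕂 𝔸 : Type*} [RCLike 𝕂] [NormedRing 𝔸] [NormedAlgebra 𝕂 𝔸]

theorem exp_sub_sum_range_eq_tsum [CompleteSpace 𝔸] (x : 𝔸) (N : ℕ) :
    exp x - ∑ s ∈ range N, (s !⁻¹ : 𝕂) • x ^ s = ∑' k, ((N + k)!⁻¹ : 𝕂) • x ^ (N + k) := by
  rw [congrFun (exp_eq_tsum 𝕂) x, ← (expSeries_summable' (𝕂 := 𝕂) x).sum_add_tsum_nat_add N,
    add_sub_cancel_left]
  simp only [add_comm _ N]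

theorem exp_neg_mul_exp_sub_sum_range [CompleteSpace 𝔸] (x : 𝔸) (M : ℕ) :
    exp (-x) * (exp x - ∑ s ∈ range (M + 1), (s !⁻¹ : 𝕂) • x ^ s) =
      ∑' i, ((-1 : 𝕂) ^ i / (i ! * M ! * (i + M + 1))) • x ^ (M + 1 + i) := by
  have htail : Summable fun k => ‖((M + 1 + k)!⁻¹ : 𝕂) • x ^ (M + 1 + k)‖ := by
    simpa only [add_comm _ (M + 1)] using
      (summable_nat_add_iff (M + 1)).2 (norm_expSeries_summable' (𝕂 := 𝕂) x)
  rw [exp_sub_sum_range_eq_tsum, exp_eq_tsum 𝕂,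
    tsum_mul_tsum_eq_tsum_sum_antidiagonal_of_summable_norm
      (norm_expSeries_summable' (𝕂 := 𝕂) (-x)) htail]
  refine tsum_congr fun i => ?_
  have hterm : ∀ p ∈ antidiagonal i,
      ((p.1 !⁻¹ : 𝕂) • (-x) ^ p.1) * (((M + 1 + p.2)!⁻¹ : 𝕂) • x ^ (M + 1 + p.2)) =
        ((-1 : 𝕂) ^ p.1 / (p.1 ! * (M + 1 + p.2)!)) • x ^ (M + 1 + i) := by
    intro p hp
    rw [HasAntidiagonal.mem_antidiagonal] at hp
    rw [← neg_one_smul 𝕂 x, smul_pow, smul_smul, smul_mul_smul_comm, ← pow_add,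
      show p.1 + (M + 1 + p.2) = M + 1 + i by omega, div_eq_mul_inv, mul_inv]
    ring_nf
  rw [sum_congr rfl hterm, ← sum_smul, sum_antidiagonal_neg_one_pow_div_factorial_mul_factorial]

theorem norm_smul_pow_le_div_factorial_mul (x : 𝔸) (M i : ℕ) :
    ‖((-1 : 𝕂) ^ i / (i ! * M ! * (i + M + 1))) • x ^ (M + 1 + i)‖ ≤
      1 / M ! * (‖x‖ ^ (M + 1 + i) / (i ! * (i + M + 1))) := by
  have hcoeff : ‖(-1 : 𝕂) ^ i / (i ! * M ! * (i + M + 1))‖ = 1 / (i ! * M ! * (i + M + 1)) := by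
    rw [norm_div, norm_pow, norm_neg, norm_one, one_pow]
    norm_cast
  calc ‖((-1 : 𝕂) ^ i / (i ! * M ! * (i + M + 1))) • x ^ (M + 1 + i)‖
      ≤ 1 / (i ! * M ! * (i + M + 1)) * ‖x‖ ^ (M + 1 + i) := by
        rw [norm_smul, hcoeff]
        gcongr
        exact norm_pow_le' x (by omega)
    _ = 1 / M ! * (‖x‖ ^ (M + 1 + i) / (i ! * (i + M + 1))) := by
        field_simp

theorem norm_tsum_neg_one_pow_div_smul_pow_le (x : 𝔸) (M : ℕ) :
    ‖∑' i, ((-1 : 𝕂) ^ i / (i ! * M ! * (i + M + 1))) • x ^ (M + 1 + i)‖ ≤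
      1 / M ! * ∑' i, ‖x‖ ^ (M + 1 + i) / (i ! * (i + M + 1)) := by
  have hmajorant := (summable_pow_div_factorial_mul ‖x‖ M).mul_left (1 / (M ! : ℝ))
  have hbound := norm_smul_pow_le_div_factorial_mul (𝕂 := 𝕂) x M
  have hsummable := hmajorant.of_nonneg_of_le (fun _ => norm_nonneg _) hbound
  calc _ ≤ _ := norm_tsum_le_tsum_norm hsummable
    _ ≤ _ := hsummable.tsum_le_tsum hbound hmajorant
    _ = _ := tsum_mul_left

end ExpTaylorRemainder

attribute [local instance] Matrix.linftyOpNormedRing Matrix.linftyOpNormedAlgebra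

open NormedSpace in
/-- Taylor remainder of the matrix exponential: with `F₀ = e^{H₀}` and
`R₀ = F₀ - Σ_{s=0}^M H₀^s/s!`,
`F₀⁻¹R₀ = Σ_{i=0}^∞ (-1)^i/(i!·M!·(i+M+1)) H₀^{M+1+i}`, and hence
`‖F₀⁻¹R₀‖ ≤ (1/M!) Σ_{i=0}^∞ ‖H₀‖^{M+1+i}/(i!(i+M+1))`. -/
theorem exp_taylor_remainder {n : ℕ} [DecidableEq (Fin n)]
    (H₀ : Matrix (Fin n) (Fin n) ℂ) (M : ℕ)
    (F₀ R₀ : Matrix (Fin n) (Fin n) ℂ)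
    (hF : F₀ = exp H₀)
    (hR : R₀ = F₀ - ∑ s ∈ Finset.range (M + 1), (s.factorial : ℂ)⁻¹ • H₀ ^ s) :
    F₀⁻¹ * R₀ =
      ∑' i : ℕ, ((-1 : ℂ) ^ i / (i.factorial * M.factorial * (i + M + 1))) •
        H₀ ^ (M + 1 + i) ∧
    ‖F₀⁻¹ * R₀‖ ≤
      (1 / (M.factorial : ℝ)) *
        ∑' i : ℕ, ‖H₀‖ ^ (M + 1 + i) / (i.factorial * (i + M + 1)) := by
  subst hF hR
  have hseries : (exp H₀)⁻¹ * (exp H₀ - ∑ s ∈ range (M + 1), (s !⁻¹ : ℂ) • H₀ ^ s) =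
      ∑' i, ((-1 : ℂ) ^ i / (i ! * M ! * (i + M + 1))) • H₀ ^ (M + 1 + i) := by
    rw [← Matrix.exp_neg]
    exact exp_neg_mul_exp_sub_sum_range H₀ M
  exact ⟨hseries, hseries ▸ norm_tsum_neg_one_pow_div_smul_pow_le H₀ M⟩
end

section
/- Let T₀ = Σ_{i=1}^M H₀^i/i! and suppose the filtered iteration is Ŝ₁ = S₁ − E₁, Ŝ_i = Ŝ_{i−1}H₀/i − E_i, with T̂₀ = Σ_{i=1}^M Ŝ_i and S_i = H₀^i/i!. Then T₀ − T̂₀ = Σ_{j=1}^M E_j Σ_{i=0}^{M−j} j! H₀^i/(i+j)!. -/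
/-!
Write `Dᵢ = Hⁱ/i! - Ŝᵢ` for the error of the filtered iteration. Subtracting the filtered
recursion from `Hⁱ/i! = (H^(i-1)/(i-1)!) H / i` gives `D₁ = E₁` and `Dᵢ = D_{i-1} H / i + Eᵢ`,
so by induction `Dᵢ = Σ_{j ≤ i} (j!/i!) E_j H^(i-j)`: each filter error `E_j` is propagated
through the remaining steps of the iteration. Summing over `i ≤ M` and exchanging the order of
summation gives the claim.
-/

open Finset

theorem factorial_div_factorial_succ {K : Type*} [Field K] (a : K) (k : ℕ) :
    ((k + 1 : ℕ) : K)⁻¹ * (a / k.factorial) = a / (k + 1).factorial := by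
  rw [Nat.factorial_succ, Nat.cast_mul, inv_mul_eq_div, div_div, mul_comm]

section FilteredTaylor

variable {K A : Type*} [Field K] [Ring A] [Algebra K A]

theorem inv_factorial_smul_pow_succ (H : A) (k : ℕ) :
    ((k + 1).factorial : K)⁻¹ • H ^ (k + 1) =
      ((k + 1 : ℕ) : K)⁻¹ • (((k.factorial : K)⁻¹ • H ^ k) * H) := by
  rw [smul_mul_assoc, smul_smul, ← pow_succ, Nat.factorial_succ, Nat.cast_mul, mul_inv]

theorem inv_factorial_smul_pow_sub_filtered_eq_sum [CharZero K] (M : ℕ) (H : A) (E S : ℕ → A)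
    (h1 : S 1 = H - E 1)
    (hrec : ∀ i, 2 ≤ i → i ≤ M → S i = (i : K)⁻¹ • (S (i - 1) * H) - E i)
    {i : ℕ} (hi : 1 ≤ i) (hiM : i ≤ M) :
    (i.factorial : K)⁻¹ • H ^ i - S i =
      ∑ j ∈ Icc 1 i, ((j.factorial : K) / i.factorial) • (E j * H ^ (i - j)) := by
  induction i, hi using Nat.le_induction with
  | base => simp [h1]
  | succ k hk ih =>
    have hS := hrec (k + 1) (by omega) hiM
    rw [Nat.add_sub_cancel] at hS
    calc (((k + 1).factorial : K)⁻¹ • H ^ (k + 1) - S (k + 1))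
        = ((k + 1 : ℕ) : K)⁻¹ • (((k.factorial : K)⁻¹ • H ^ k - S k) * H) + E (k + 1) := by
          rw [hS, inv_factorial_smul_pow_succ, sub_mul, smul_sub]
          abel
      _ = _ := by
          rw [ih (by omega), sum_mul, smul_sum, sum_Icc_succ_top (by omega), Nat.sub_self,
            pow_zero, mul_one, div_self (Nat.cast_ne_zero.2 (Nat.factorial_ne_zero _)), one_smul]
          congr 1
          refine sum_congr rfl fun j hj => ?_
          rw [smul_mul_assoc, mul_assoc, ← pow_succ, smul_smul, factorial_div_factorial_succ,
            Nat.sub_add_comm (mem_Icc.1 hj).2]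

end FilteredTaylor

theorem sum_Icc_sum_Icc_eq_sum_Icc_sum_range {A : Type*} [AddCommMonoid A] (M : ℕ)
    (f : ℕ → ℕ → A) :
    ∑ i ∈ Icc 1 M, ∑ j ∈ Icc 1 i, f i j =
      ∑ j ∈ Icc 1 M, ∑ i ∈ range (M - j + 1), f (i + j) j := by
  rw [sum_comm' (t' := Icc 1 M) (s' := fun j => Icc j M) fun i j => by simp only [mem_Icc]; omega]
  refine sum_congr rfl fun j hj => ?_
  rw [← Ico_add_one_right_eq_Icc, sum_Ico_eq_sum_range, Nat.sub_add_comm (mem_Icc.1 hj).2]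
  simp only [add_comm j]

theorem filtered_taylor_error_general {n : ℕ} (M : ℕ)
    (H₀ : Matrix (Fin n) (Fin n) ℂ) (E Shat : ℕ → Matrix (Fin n) (Fin n) ℂ)
    (h1 : Shat 1 = H₀ - E 1)
    (hrec : ∀ i, 2 ≤ i → i ≤ M → Shat i = (i : ℂ)⁻¹ • (Shat (i - 1) * H₀) - E i) :
    (∑ i ∈ Finset.Icc 1 M, (i.factorial : ℂ)⁻¹ • H₀ ^ i) -
        (∑ i ∈ Finset.Icc 1 M, Shat i) =
      ∑ j ∈ Finset.Icc 1 M, E j *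
        ∑ i ∈ Finset.range (M - j + 1),
          ((j.factorial : ℂ) / ((i + j).factorial : ℂ)) • H₀ ^ i := by
  rw [← sum_sub_distrib]
  rw [sum_congr rfl fun i hi => inv_factorial_smul_pow_sub_filtered_eq_sum M H₀ E Shat h1 hrec
    (mem_Icc.1 hi).1 (mem_Icc.1 hi).2, sum_Icc_sum_Icc_eq_sum_Icc_sum_range]
  refine sum_congr rfl fun j _ => ?_
  rw [mul_sum]
  refine sum_congr rfl fun i _ => ?_
  rw [Nat.add_sub_cancel, mul_smul_comm]

/-- Filtered Taylor-series iteration: with `S_i = H₀^i/i!`, `T₀ = Σ_{i=1}^M S_i`,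
`Ŝ₁ = S₁ - E₁`, `Ŝ_i = Ŝ_{i-1}H₀/i - E_i` and `T̂₀ = Σ_{i=1}^M Ŝ_i`, we have
`T₀ - T̂₀ = Σ_{j=1}^M E_j Σ_{i=0}^{M-j} j! H₀^i/(i+j)!`. -/
theorem filtered_taylor_error {n : ℕ} (M : ℕ) (hM : 1 ≤ M)
    (H₀ : Matrix (Fin n) (Fin n) ℂ) (E Shat : ℕ → Matrix (Fin n) (Fin n) ℂ)
    (h1 : Shat 1 = H₀ - E 1)
    (hrec : ∀ i, 2 ≤ i → i ≤ M → Shat i = (i : ℂ)⁻¹ • (Shat (i - 1) * H₀) - E i) :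
    (∑ i ∈ Finset.Icc 1 M, (i.factorial : ℂ)⁻¹ • H₀ ^ i) -
        (∑ i ∈ Finset.Icc 1 M, Shat i) =
      ∑ j ∈ Finset.Icc 1 M, E j *
        ∑ i ∈ Finset.range (M - j + 1),
          ((j.factorial : ℂ) / ((i + j).factorial : ℂ)) • H₀ ^ i :=
  filtered_taylor_error_general M H₀ E Shat h1 hrec
end

section
/- The filtering iteration defined by b₀ = ‖A‖-related initial value with thresholds ε_f^{(n+1)} = ε_g/m_n and m_{n+1} = b_{n+1}/ε_f^{(n+1)} produces a nonincreasing sequence b_n whenever b_n > ε_g, and terminates in finitely many steps with b_n ≤ ε_g(1 + e_r) for any e_r > 0. -/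
attribute [local instance] Matrix.frobeniusNormedAddCommGroup

/-!
Filtering only zeroes entries, so the residual norms `‖R k‖` never increase. If they all stayed
above `εg (1 + er)`, then `m (k + 1) = ‖R (k + 1)‖ m k / εg` would grow geometrically with ratio
`1 + er`. But after filtering at threshold `εf (k + 1)` every entry has norm at most that
threshold, so `‖R (k + 1)‖ ≤ n εf (k + 1)`, i.e. `m (k + 1) ≤ n`.
-/

namespace Matrix

attribute [local instance] Matrix.frobeniusSeminormedAddCommGroup

variable {m n α β : Type*} [Fintype m] [Fintype n]
  [SeminormedAddCommGroup α] [SeminormedAddCommGroup β]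

theorem frobenius_norm_sq (A : Matrix m n α) : ‖A‖ ^ 2 = ∑ i, ∑ j, ‖A i j‖ ^ 2 := by
  rw [frobenius_norm_def, ← Real.rpow_natCast, ← Real.rpow_mul (by positivity)]
  norm_num

theorem frobenius_norm_le_of_forall_norm_le (A : Matrix m n α) (B : Matrix m n β)
    (h : ∀ i j, ‖A i j‖ ≤ ‖B i j‖) : ‖A‖ ≤ ‖B‖ := by
  refine (pow_le_pow_iff_left₀ (norm_nonneg A) (norm_nonneg B) two_ne_zero).mp ?_
  rw [frobenius_norm_sq, frobenius_norm_sq]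
  gcongr with i _ j _
  exact h i j

theorem frobenius_norm_le_of_forall_le (A : Matrix m n α) {c : ℝ} (hc : 0 ≤ c)
    (h : ∀ i j, ‖A i j‖ ≤ c) : ‖A‖ ≤ √(Fintype.card m * Fintype.card n) * c := by
  refine (pow_le_pow_iff_left₀ (norm_nonneg A) (by positivity) two_ne_zero).mp ?_
  calc ‖A‖ ^ 2 = ∑ i, ∑ j, ‖A i j‖ ^ 2 := frobenius_norm_sq A
    _ ≤ ∑ _i : m, ∑ _j : n, c ^ 2 := by gcongr with i _ j _; exact h i j
    _ = (√(Fintype.card m * Fintype.card n) * c) ^ 2 := by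
      rw [mul_pow, Real.sq_sqrt (by positivity)]
      simp [mul_assoc]

noncomputable def dropLargeEntries (c : ℝ) (A : Matrix m n α) : Matrix m n α :=
  A.map fun x => if ‖x‖ > c then 0 else x

theorem norm_dropLargeEntries_le (c : ℝ) (A : Matrix m n α) : ‖A.dropLargeEntries c‖ ≤ ‖A‖ :=
  frobenius_norm_le_of_forall_norm_le _ _ fun i j => by
    rw [dropLargeEntries, map_apply]
    split_ifs <;> simp

theorem norm_dropLargeEntries_le_mul {c : ℝ} (hc : 0 ≤ c) (A : Matrix m n α) :
    ‖A.dropLargeEntries c‖ ≤ √(Fintype.card m * Fintype.card n) * c :=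
  frobenius_norm_le_of_forall_le _ hc fun i j => by
    rw [dropLargeEntries, map_apply]
    split_ifs with h
    · simpa using hc
    · exact not_lt.mp h

end Matrix

theorem pow_le_of_forall_mul_le_succ {u : ℕ → ℝ} {q : ℝ} (hq : 0 < q) (h0 : 1 ≤ u 0)
    (h : ∀ k, 0 < u k → q * u k ≤ u (k + 1)) (k : ℕ) : q ^ k ≤ u k := by
  induction k with
  | zero => simpa using h0
  | succ k ih =>
    calc q ^ (k + 1) = q * q ^ k := pow_succ' q k
      _ ≤ q * u k := by gcongr
      _ ≤ u (k + 1) := h k ((pow_pos hq k).trans_le ih)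

/-- Algorithm 4.1 (filtering): with thresholds `ε_f^{(k+1)} = ε_g / m_k`,
`m_{k+1} = b_{k+1} / ε_f^{(k+1)}`, `m₀ = 1`, where at each step the entries of the
residual matrix with absolute value exceeding the threshold are removed, and
`b_k = ‖residual_k‖`, the sequence `b_k` is nonincreasing whenever `b_k > ε_g`, and
for any `e_r > 0` there is a step at which `b_k ≤ ε_g (1 + e_r)`. -/
theorem filtering_terminates {n : ℕ} (εg er : ℝ) (hεg : 0 < εg) (her : 0 < er)
    (R : ℕ → Matrix (Fin n) (Fin n) ℂ) (m εf : ℕ → ℝ)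
    (hm0 : m 0 = 1)
    (hεf : ∀ k, εf (k + 1) = εg / m k)
    (hstep : ∀ k i j, R (k + 1) i j =
      if ‖R k i j‖ > εf (k + 1) then 0 else R k i j)
    (hm : ∀ k, m (k + 1) = ‖R (k + 1)‖ / εf (k + 1)) :
    (∀ k, εg < ‖R k‖ → ‖R (k + 1)‖ ≤ ‖R k‖) ∧
      ∃ N, ‖R N‖ ≤ εg * (1 + er) := by
  have hR : ∀ k, R (k + 1) = (R k).dropLargeEntries (εf (k + 1)) :=
    fun k => Matrix.ext (hstep k)
  refine ⟨fun k _ => hR k ▸ Matrix.norm_dropLargeEntries_le _ _, ?_⟩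
  by_contra! hlarge
  have hgeom : ∀ k, (1 + er) ^ k ≤ m k :=
    pow_le_of_forall_mul_le_succ (by positivity) hm0.ge fun k hmk => by
      rw [hm, hεf, div_div_eq_mul_div, le_div_iff₀ hεg]
      nlinarith [hlarge (k + 1)]
  have hbounded : ∀ k, m (k + 1) ≤ n := by
    intro k
    have hεf_pos : 0 < εf (k + 1) := by
      rw [hεf]
      exact div_pos hεg ((pow_pos (by positivity) k).trans_le (hgeom k))
    have hnorm := Matrix.norm_dropLargeEntries_le_mul hεf_pos.le (R k)
    rw [Fintype.card_fin, Real.sqrt_mul_self n.cast_nonneg, ← hR] at hnorm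
    rwa [hm, div_le_iff₀ hεf_pos]
  obtain ⟨k, hk⟩ := pow_unbounded_of_one_lt (n : ℝ) (lt_add_of_pos_right 1 her)
  have hpow_mono : (1 + er) ^ k ≤ (1 + er) ^ (k + 1) :=
    pow_le_pow_right₀ (le_add_of_nonneg_right her.le) k.le_succ
  exact (hk.trans_le (hpow_mono.trans (hgeom (k + 1)))).not_ge (hbounded k)
end

section
/- Suppose the error matrices satisfy R̂_i = F_{i−1}R̂_{i−1} + R̂_{i−1}F_{i−1} + B_i (neglecting the quadratic term), with R̂₀ = R₀ + B₀ and F_i = F₀^{2^i} where all F_i commute with R₀. Then R̂_N = 2^N F_N F₀⁻¹ R₀·F₀ + Σ_{s=0}^{N} Σ_{j=0}^{2^{N−s}−1} F_N F_s^{−1−j} B_s F_s^{j} (equivalently, the solution of the linear two-sided recursion is given by this double sum formula). -/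
set_option maxHeartbeats 1000000

/-- Linearized error propagation of the squaring phase with filtering: if
`R̂₀ = R₀ + B₀`, `R̂_i = F_{i-1}R̂_{i-1} + R̂_{i-1}F_{i-1} + B_i` with `F_i = F₀^{2^i}`
and `R₀` commuting with `F₀`, then
`R̂_N = 2^N F_N F₀⁻¹ R₀ + Σ_{s=0}^N Σ_{j=0}^{2^{N-s}-1} F_N F_s^{-1-j} B_s F_s^j`. -/
theorem linearized_error_propagation {n : ℕ} [DecidableEq (Fin n)] (N : ℕ)
    (F₀ R₀ : Matrix (Fin n) (Fin n) ℂ) [Invertible F₀] (hcomm : Commute F₀ R₀)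
    (B Rhat : ℕ → Matrix (Fin n) (Fin n) ℂ)
    (h0 : Rhat 0 = R₀ + B 0)
    (hrec : ∀ i, 1 ≤ i → i ≤ N →
      Rhat i = F₀ ^ 2 ^ (i - 1) * Rhat (i - 1) + Rhat (i - 1) * F₀ ^ 2 ^ (i - 1) + B i) :
    Rhat N = ((2 : ℂ) ^ N) • (F₀ ^ 2 ^ N * ⅟F₀ * R₀) +
      ∑ s ∈ Finset.range (N + 1), ∑ j ∈ Finset.range (2 ^ (N - s)),
        F₀ ^ 2 ^ N * (⅟F₀) ^ (2 ^ s * (j + 1)) * B s * F₀ ^ (2 ^ s * j) := by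
  have hFu : ∀ a : ℕ, F₀ ^ a * (⅟F₀) ^ a = 1 := fun a => by
    rw [← invOf_pow]; exact mul_invOf_self _
  have habs : ∀ a m : ℕ, F₀ ^ (a + a) * (⅟F₀) ^ (a + m) = F₀ ^ a * (⅟F₀) ^ m := fun a m => by
    rw [pow_add, pow_add, mul_assoc, ← mul_assoc (F₀ ^ a) ((⅟F₀) ^ a), hFu, one_mul]
  have hcu : Commute F₀ (⅟F₀) := (mul_invOf_self F₀).trans (invOf_mul_self F₀).symm
  revert hrec
  induction N with
  | zero =>
    intro _
    simp [h0, mul_add]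
  | succ N ih =>
    intro hrec
    have IH := ih (fun i h1 h2 => hrec i h1 (by omega))
    have hstep := hrec (N + 1) (by omega) le_rfl
    simp only [Nat.add_sub_cancel] at hstep
    rw [IH] at hstep
    rw [hstep]
    clear hstep IH ih hrec h0
    have e3 : (2 : ℕ) ^ (N + 1) = 2 ^ N + 2 ^ N := by rw [pow_succ, Nat.mul_two]
    -- scalar part
    set P : Matrix (Fin n) (Fin n) ℂ := F₀ ^ 2 ^ N * ⅟F₀ * R₀ with hP
    have hA1 : F₀ ^ 2 ^ N * P = F₀ ^ 2 ^ (N + 1) * ⅟F₀ * R₀ := by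
      rw [hP, e3, pow_add]; simp [mul_assoc]
    have hA2 : P * F₀ ^ 2 ^ N = F₀ ^ 2 ^ (N + 1) * ⅟F₀ * R₀ := by
      have c1 : R₀ * F₀ ^ 2 ^ N = F₀ ^ 2 ^ N * R₀ := ((hcomm.pow_left _).eq).symm
      have c2 : (⅟F₀) * F₀ ^ 2 ^ N = F₀ ^ 2 ^ N * ⅟F₀ := ((hcu.symm.pow_right _).eq)
      rw [hP, e3, pow_add]
      calc F₀ ^ 2 ^ N * ⅟F₀ * R₀ * F₀ ^ 2 ^ N
          = F₀ ^ 2 ^ N * ⅟F₀ * (R₀ * F₀ ^ 2 ^ N) := by rw [mul_assoc]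
        _ = F₀ ^ 2 ^ N * ⅟F₀ * (F₀ ^ 2 ^ N * R₀) := by rw [c1]
        _ = F₀ ^ 2 ^ N * ((⅟F₀) * F₀ ^ 2 ^ N) * R₀ := by simp [mul_assoc]
        _ = F₀ ^ 2 ^ N * (F₀ ^ 2 ^ N * ⅟F₀) * R₀ := by rw [c2]
        _ = F₀ ^ 2 ^ N * F₀ ^ 2 ^ N * ⅟F₀ * R₀ := by simp [mul_assoc]
    have hscal : F₀ ^ 2 ^ N * ((2 : ℂ) ^ N • P) + ((2 : ℂ) ^ N • P) * F₀ ^ 2 ^ N =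
        (2 : ℂ) ^ (N + 1) • (F₀ ^ 2 ^ (N + 1) * ⅟F₀ * R₀) := by
      rw [mul_smul_comm, smul_mul_assoc, hA1, hA2, ← add_smul]
      congr 1
      ring
    -- sum part
    set S : Matrix (Fin n) (Fin n) ℂ := ∑ s ∈ Finset.range (N + 1), ∑ j ∈ Finset.range (2 ^ (N - s)),
        F₀ ^ 2 ^ N * (⅟F₀) ^ (2 ^ s * (j + 1)) * B s * F₀ ^ (2 ^ s * j) with hS
    have hsum : F₀ ^ 2 ^ N * S + S * F₀ ^ 2 ^ N + B (N + 1) =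
        ∑ s ∈ Finset.range (N + 1 + 1), ∑ j ∈ Finset.range (2 ^ (N + 1 - s)),
          F₀ ^ 2 ^ (N + 1) * (⅟F₀) ^ (2 ^ s * (j + 1)) * B s * F₀ ^ (2 ^ s * j) := by
      have hRHS : ∑ s ∈ Finset.range (N + 1 + 1), ∑ j ∈ Finset.range (2 ^ (N + 1 - s)),
            F₀ ^ 2 ^ (N + 1) * (⅟F₀) ^ (2 ^ s * (j + 1)) * B s * F₀ ^ (2 ^ s * j) =
          (∑ s ∈ Finset.range (N + 1),
            ((∑ j ∈ Finset.range (2 ^ (N - s)),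
                F₀ ^ 2 ^ (N + 1) * (⅟F₀) ^ (2 ^ s * (j + 1)) * B s * F₀ ^ (2 ^ s * j)) +
             ∑ j ∈ Finset.range (2 ^ (N - s)),
                F₀ ^ 2 ^ (N + 1) * (⅟F₀) ^ (2 ^ s * (2 ^ (N - s) + j + 1)) * B s *
                  F₀ ^ (2 ^ s * (2 ^ (N - s) + j)))) + B (N + 1) := by
        rw [Finset.sum_range_succ]
        congr 1
        · refine Finset.sum_congr rfl (fun s hs => ?_)
          have hsN : s ≤ N := Nat.lt_succ_iff.mp (Finset.mem_range.mp hs)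
          have hsplit : 2 ^ (N + 1 - s) = 2 ^ (N - s) + 2 ^ (N - s) := by
            have h' : N + 1 - s = (N - s) + 1 := by omega
            rw [h', pow_succ, Nat.mul_two]
          rw [hsplit, Finset.sum_range_add]
        · simp [hFu]
      rw [hRHS, Finset.sum_add_distrib]
      have hL : F₀ ^ 2 ^ N * S = ∑ s ∈ Finset.range (N + 1), ∑ j ∈ Finset.range (2 ^ (N - s)),
          F₀ ^ 2 ^ (N + 1) * (⅟F₀) ^ (2 ^ s * (j + 1)) * B s * F₀ ^ (2 ^ s * j) := by
        rw [hS, Finset.mul_sum]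
        refine Finset.sum_congr rfl (fun s _ => ?_)
        rw [Finset.mul_sum]
        refine Finset.sum_congr rfl (fun j _ => ?_)
        rw [e3, pow_add]
        simp [mul_assoc]
      have hR : S * F₀ ^ 2 ^ N = ∑ s ∈ Finset.range (N + 1), ∑ j ∈ Finset.range (2 ^ (N - s)),
          F₀ ^ 2 ^ (N + 1) * (⅟F₀) ^ (2 ^ s * (2 ^ (N - s) + j + 1)) * B s *
            F₀ ^ (2 ^ s * (2 ^ (N - s) + j)) := by
        rw [hS, Finset.sum_mul]
        refine Finset.sum_congr rfl (fun s hs => ?_)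
        rw [Finset.sum_mul]
        refine Finset.sum_congr rfl (fun j _ => ?_)
        have hsN : s ≤ N := Nat.lt_succ_iff.mp (Finset.mem_range.mp hs)
        have h2 : 2 ^ s * 2 ^ (N - s) = 2 ^ N := by
          rw [← pow_add]; congr 1; omega
        have e1 : 2 ^ s * (2 ^ (N - s) + j + 1) = 2 ^ N + 2 ^ s * (j + 1) := by
          rw [← h2]; ring
        have e2 : 2 ^ s * (2 ^ (N - s) + j) = 2 ^ s * j + 2 ^ N := by
          rw [← h2]; ring
        rw [e1, e2, e3, habs, pow_add]
        simp [mul_assoc]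
      rw [hL, hR]
    calc F₀ ^ 2 ^ N * ((2 : ℂ) ^ N • P + S) + ((2 : ℂ) ^ N • P + S) * F₀ ^ 2 ^ N + B (N + 1)
        = (F₀ ^ 2 ^ N * ((2 : ℂ) ^ N • P) + ((2 : ℂ) ^ N • P) * F₀ ^ 2 ^ N) +
          (F₀ ^ 2 ^ N * S + S * F₀ ^ 2 ^ N + B (N + 1)) := by
          rw [mul_add, add_mul]; abel
      _ = _ := by rw [hscal, hsum]
end
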